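/- Let m, N, T ≥ 1 be integers and α > 0. Let Φ : {1,…,T} → {0,…,N}, and let y_{t,k} ∈ ℝ^m with ‖y_{t,k}‖ ≤ 1 for each t ∈ {1,…,T} and k ∈ {1,…,Φ_t}. Define Σ_0 := α I_m and Σ_t := Σ_{t−1} + Σ_{k=1}^{Φ_t} y_{t,k} y_{t,k}ᵀ, and g_{t,k}² := y_{t,k}ᵀ (Σ_{t−1})^{−1} y_{t,k}. Then Σ_{t=1}^{T} Σ_{k=1}^{Φ_t} g_{t,k}² ≤ N m log(1 + TN/(m α)) / (α log(1 + α^{−1})). -/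

import Mathlib

/-!
Since `Σ_{t-1} ≥ α I`, every `g² = y_{t,k}ᵀ Σ_{t-1}⁻¹ y_{t,k}` lies in `[0, α⁻¹]`, where concavity
of `log (1 + ·)` gives `g² ≤ α⁻¹ log (1 + g²) / log (1 + α⁻¹)`. By the matrix determinant lemma and
the monotonicity of `det` under adding outer products, `det Σ_{t-1} (1 + g²) ≤ det Σ_t` for every
single `k`, so round `t` contributes at most `Φ_t ≤ N` times the increment of `log det Σ`. These
increments telescope to `log det Σ_T - m log α`, and AM-GM on the eigenvalues bounds `det Σ_T` by
`(tr Σ_T / m)^m ≤ (α + TN/m)^m`.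
-/
open Finset Matrix

/-- `Sig m α Φ y t = Σ_t`: the regularized Gram matrix after `t` rounds, defined by
`Σ_0 = α I_m` and `Σ_t = Σ_{t-1} + Σ_{k=1}^{Φ_t} y_{t,k} y_{t,k}ᵀ`. -/
noncomputable def Sig (m : ℕ) (α : ℝ) (Φ : ℕ → ℕ) (y : ℕ → ℕ → Fin m → ℝ) :
    ℕ → Matrix (Fin m) (Fin m) ℝ
  | 0 => α • (1 : Matrix (Fin m) (Fin m) ℝ)
  | t + 1 => Sig m α Φ y t +
      ∑ k ∈ Finset.Icc 1 (Φ (t + 1)), Matrix.vecMulVec (y (t + 1) k) (y (t + 1) k)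

theorem Real.prod_le_sum_div_card_pow {ι : Type*} (s : Finset ι) (f : ι → ℝ)
    (hf : ∀ i ∈ s, 0 ≤ f i) : ∏ i ∈ s, f i ≤ ((∑ i ∈ s, f i) / #s) ^ #s := by
  rcases s.eq_empty_or_nonempty with rfl | hs
  · simp
  have hcard : (0 : ℝ) < #s := by exact_mod_cast hs.card_pos
  have amgm := Real.geom_mean_le_arith_mean_weighted s (fun _ => (#s : ℝ)⁻¹) f
    (fun _ _ => by positivity) (by simp [hcard.ne']) hf
  rw [← Finset.mul_sum, inv_mul_eq_div, Real.finsetProd_rpow s f hf] at amgm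
  calc ∏ i ∈ s, f i = ((∏ i ∈ s, f i) ^ (#s : ℝ)⁻¹) ^ #s := by
        rw [← Real.rpow_mul_natCast (prod_nonneg hf), inv_mul_cancel₀ hcard.ne', Real.rpow_one]
    _ ≤ _ := by gcongr; exact Real.rpow_nonneg (prod_nonneg hf) _

theorem Matrix.PosSemidef.det_le_trace_div_card_pow {n : Type*} [Fintype n] [DecidableEq n]
    {A : Matrix n n ℝ} (hA : A.PosSemidef) :
    A.det ≤ (A.trace / Fintype.card n) ^ Fintype.card n := by
  rw [hA.isHermitian.det_eq_prod_eigenvalues, hA.isHermitian.trace_eq_sum_eigenvalues]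
  simpa using Real.prod_le_sum_div_card_pow univ _ fun i _ => hA.eigenvalues_nonneg i

theorem Matrix.det_add_vecMulVec {n R : Type*} [Fintype n] [DecidableEq n] [CommRing R]
    {A : Matrix n n R} (hA : IsUnit A.det) (v w : n → R) :
    (A + vecMulVec v w).det = A.det * (1 + w ⬝ᵥ A⁻¹ *ᵥ v) := by
  rw [vecMulVec_eq Unit, det_add_replicateCol_mul_replicateRow hA]
  congr 1
  rw [det_unique, Matrix.mul_assoc,
    ← replicateCol_mulVec, add_apply, one_apply_eq, replicateRow_mul_replicateCol_apply]

theorem Matrix.posSemidef_vecMulVec_self {n : Type*} [Fintype n] (v : n → ℝ) :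
    (vecMulVec v v).PosSemidef := by
  simpa using posSemidef_vecMulVec_self_star v

theorem Matrix.posSemidef_sum_vecMulVec_self {n ι : Type*} [Fintype n] (s : Finset ι)
    (v : ι → n → ℝ) : (∑ i ∈ s, vecMulVec (v i) (v i)).PosSemidef :=
  posSemidef_sum s fun i _ => posSemidef_vecMulVec_self (v i)

theorem Matrix.PosDef.det_le_det_add_sum_vecMulVec {n ι : Type*} [Fintype n] [DecidableEq n]
    {A : Matrix n n ℝ} (hA : A.PosDef) (s : Finset ι) (v : ι → n → ℝ) :
    A.det ≤ (A + ∑ i ∈ s, vecMulVec (v i) (v i)).det := by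
  classical
  induction s using Finset.induction with
  | empty => simp
  | insert a s ha ih =>
    have hB : (A + ∑ i ∈ s, vecMulVec (v i) (v i)).PosDef :=
      hA.add_posSemidef (posSemidef_sum_vecMulVec_self s v)
    rw [sum_insert ha, add_comm (vecMulVec _ _), ← add_assoc,
      det_add_vecMulVec hB.det_pos.ne'.isUnit]
    have hg : 0 ≤ v a ⬝ᵥ (A + ∑ i ∈ s, vecMulVec (v i) (v i))⁻¹ *ᵥ v a := by
      simpa using hB.inv.posSemidef.dotProduct_mulVec_nonneg (v a)
    nlinarith [hB.det_pos]

theorem Real.mul_log_one_add_le {x c : ℝ} (hx : 0 ≤ x) (hxc : x ≤ c) :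
    x * Real.log (1 + c) ≤ c * Real.log (1 + x) := by
  rcases hx.eq_or_lt with rfl | hx
  · simp
  have hc : 0 < c := hx.trans_le hxc
  have hslope := strictConcaveOn_log_Ioi.concaveOn.slope_anti (Set.mem_Ioi.2 one_pos)
    (a := 1 + x) (b := 1 + c) ⟨Set.mem_Ioi.2 (by linarith), by simp [hx.ne']⟩
    ⟨Set.mem_Ioi.2 (by linarith), by simp [hc.ne']⟩ (by linarith)
  simp only [slope_def_field, Real.log_one, sub_zero, add_sub_cancel_left] at hslope
  rw [div_le_div_iff₀ hc hx] at hslope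
  linarith

theorem Matrix.PosDef.mul_dotProduct_inv_mulVec_le {n : Type*} [Fintype n] [DecidableEq n]
    {A : Matrix n n ℝ} (hA : A.PosDef) {α : ℝ} (hα : 0 ≤ α)
    (hlow : ∀ z, α * (z ⬝ᵥ z) ≤ z ⬝ᵥ A *ᵥ z) (v : n → ℝ) :
    α * (v ⬝ᵥ A⁻¹ *ᵥ v) ≤ v ⬝ᵥ v := by
  set z := A⁻¹ *ᵥ v
  have hAz : A *ᵥ z = v := by
    rw [mulVec_mulVec, mul_nonsing_inv A hA.det_pos.ne'.isUnit, one_mulVec]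
  have hq : α * (z ⬝ᵥ z) ≤ v ⬝ᵥ z := (hlow z).trans_eq (by rw [hAz, dotProduct_comm])
  have hcs : (v ⬝ᵥ z) ^ 2 ≤ (v ⬝ᵥ v) * (z ⬝ᵥ z) := by
    simpa [dotProduct, pow_two] using sum_mul_sq_le_sq_mul_sq univ v z
  have hvv : 0 ≤ v ⬝ᵥ v := by
    simpa using (PosSemidef.one (n := n) (R := ℝ)).dotProduct_mulVec_nonneg v
  nlinarith [mul_le_mul_of_nonneg_left hcs hα, mul_le_mul_of_nonneg_left hq hvv]

theorem Finset.sum_Icc_one_eq_sum_range {M : Type*} [AddCommMonoid M] (f : ℕ → M) (T : ℕ) :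
    ∑ t ∈ Icc 1 T, f t = ∑ t ∈ range T, f (t + 1) := by
  rw [range_eq_Ico, sum_Ico_add', zero_add, Ico_add_one_right_eq_Icc]

section Sig

variable {m : ℕ} {α : ℝ} (Φ : ℕ → ℕ) (y : ℕ → ℕ → Fin m → ℝ)

theorem posDef_Sig (hα : 0 < α) (t : ℕ) : (Sig m α Φ y t).PosDef := by
  induction t with
  | zero => simpa [Sig, smul_one_eq_diagonal] using PosDef.diagonal fun _ => hα
  | succ t ih => exact ih.add_posSemidef (posSemidef_sum_vecMulVec_self _ _)

theorem mul_dotProduct_self_le_dotProduct_Sig_mulVec (t : ℕ) (z : Fin m → ℝ) :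
    α * (z ⬝ᵥ z) ≤ z ⬝ᵥ Sig m α Φ y t *ᵥ z := by
  induction t with
  | zero => simp [Sig, smul_mulVec, dotProduct_smul]
  | succ t ih =>
    have hP :=
      (posSemidef_sum_vecMulVec_self (Icc 1 (Φ (t + 1))) (y (t + 1))).dotProduct_mulVec_nonneg z
    simp only [star_trivial] at hP
    rw [Sig, add_mulVec, dotProduct_add]
    linarith

theorem trace_Sig (t : ℕ) :
    (Sig m α Φ y t).trace = α * m + ∑ s ∈ Icc 1 t, ∑ k ∈ Icc 1 (Φ s), y s k ⬝ᵥ y s k := by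
  induction t with
  | zero => simp [Sig]
  | succ t ih =>
    simp only [Sig, trace_add, trace_sum, trace_vecMulVec, ih,
      sum_Icc_succ_top (Nat.le_add_left 1 t)]
    ring

theorem det_Sig_le_det_Sig_succ (hα : 0 < α) (t : ℕ) :
    (Sig m α Φ y t).det ≤ (Sig m α Φ y (t + 1)).det :=
  (posDef_Sig Φ y hα t).det_le_det_add_sum_vecMulVec _ _

theorem det_Sig_mul_le_det_Sig_succ (hα : 0 < α) {t k : ℕ} (hk : k ∈ Icc 1 (Φ (t + 1))) :
    (Sig m α Φ y t).det * (1 + y (t + 1) k ⬝ᵥ (Sig m α Φ y t)⁻¹ *ᵥ y (t + 1) k) ≤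
      (Sig m α Φ y (t + 1)).det := by
  have hA := posDef_Sig Φ y hα t
  have hsplit : Sig m α Φ y (t + 1) = (Sig m α Φ y t + vecMulVec (y (t + 1) k) (y (t + 1) k)) +
      ∑ j ∈ (Icc 1 (Φ (t + 1))).erase k, vecMulVec (y (t + 1) j) (y (t + 1) j) := by
    rw [Sig, add_assoc, add_sum_erase _ (fun j => vecMulVec (y (t + 1) j) (y (t + 1) j)) hk]
  rw [hsplit, ← det_add_vecMulVec hA.det_pos.ne'.isUnit]
  exact (hA.add_posSemidef (posSemidef_vecMulVec_self _)).det_le_det_add_sum_vecMulVec _ _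

theorem dotProduct_inv_Sig_mulVec_le (hα : 0 < α) {t k : ℕ} (hk : k ∈ Icc 1 (Φ (t + 1)))
    (hy : y (t + 1) k ⬝ᵥ y (t + 1) k ≤ 1) :
    y (t + 1) k ⬝ᵥ (Sig m α Φ y t)⁻¹ *ᵥ y (t + 1) k ≤ α⁻¹ / Real.log (1 + α⁻¹) *
      (Real.log (Sig m α Φ y (t + 1)).det - Real.log (Sig m α Φ y t).det) := by
  set g := y (t + 1) k ⬝ᵥ (Sig m α Φ y t)⁻¹ *ᵥ y (t + 1) k
  have hA := posDef_Sig Φ y hα t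
  have hg0 : 0 ≤ g := by simpa using hA.inv.posSemidef.dotProduct_mulVec_nonneg (y (t + 1) k)
  have hgα : g ≤ α⁻¹ := by
    rw [← one_div, le_div_iff₀' hα]
    exact (hA.mul_dotProduct_inv_mulVec_le hα.le
      (mul_dotProduct_self_le_dotProduct_Sig_mulVec Φ y t) (y (t + 1) k)).trans hy
  have hlog : Real.log (1 + g) ≤
      Real.log (Sig m α Φ y (t + 1)).det - Real.log (Sig m α Φ y t).det := by
    have hg1 : 0 < 1 + g := by linarith
    rw [le_sub_iff_add_le', ← Real.log_mul hA.det_pos.ne' hg1.ne']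
    exact Real.log_le_log (mul_pos hA.det_pos hg1) (det_Sig_mul_le_det_Sig_succ Φ y hα hk)
  have hL : 0 < Real.log (1 + α⁻¹) := Real.log_pos (by simpa using hα)
  rw [div_mul_eq_mul_div, le_div_iff₀ hL]
  calc g * Real.log (1 + α⁻¹) ≤ α⁻¹ * Real.log (1 + g) := Real.mul_log_one_add_le hg0 hgα
    _ ≤ _ := by gcongr

theorem sum_dotProduct_inv_Sig_mulVec_le (hα : 0 < α) {t N : ℕ} (hΦ : Φ (t + 1) ≤ N)
    (hy : ∀ k ∈ Icc 1 (Φ (t + 1)), y (t + 1) k ⬝ᵥ y (t + 1) k ≤ 1) :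
    ∑ k ∈ Icc 1 (Φ (t + 1)), y (t + 1) k ⬝ᵥ (Sig m α Φ y t)⁻¹ *ᵥ y (t + 1) k ≤
      N * (α⁻¹ / Real.log (1 + α⁻¹) *
        (Real.log (Sig m α Φ y (t + 1)).det - Real.log (Sig m α Φ y t).det)) := by
  have hL : 0 < Real.log (1 + α⁻¹) := Real.log_pos (by simpa using hα)
  have hΔ : 0 ≤ Real.log (Sig m α Φ y (t + 1)).det - Real.log (Sig m α Φ y t).det :=
    sub_nonneg.2 (Real.log_le_log (posDef_Sig Φ y hα t).det_pos (det_Sig_le_det_Sig_succ Φ y hα t))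
  calc _ ≤ #(Icc 1 (Φ (t + 1))) • (α⁻¹ / Real.log (1 + α⁻¹) *
        (Real.log (Sig m α Φ y (t + 1)).det - Real.log (Sig m α Φ y t).det)) :=
      sum_le_card_nsmul _ _ _ fun k hk => dotProduct_inv_Sig_mulVec_le Φ y hα hk (hy k hk)
    _ ≤ _ := by
      rw [Nat.card_Icc, add_tsub_cancel_right, nsmul_eq_mul]
      gcongr

theorem log_det_Sig_sub_log_det_Sig_zero_le (hα : 0 < α) {T N : ℕ} (hΦ : ∀ t ∈ Icc 1 T, Φ t ≤ N)
    (hy : ∀ t ∈ Icc 1 T, ∀ k ∈ Icc 1 (Φ t), y t k ⬝ᵥ y t k ≤ 1) :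
    Real.log (Sig m α Φ y T).det - Real.log (Sig m α Φ y 0).det ≤
      m * Real.log (1 + T * N / (m * α)) := by
  have hA := posDef_Sig Φ y hα T
  have hW : ∑ t ∈ Icc 1 T, ∑ k ∈ Icc 1 (Φ t), y t k ⬝ᵥ y t k ≤ T * N := by
    calc _ ≤ ∑ t ∈ Icc 1 T, (N : ℝ) := sum_le_sum fun t ht =>
          (sum_le_card_nsmul _ _ 1 (hy t ht)).trans (by simpa using hΦ t ht)
      _ = T * N := by simp
  have htr : (Sig m α Φ y T).trace / (m * α) ≤ 1 + T * N / (m * α) := by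
    rw [trace_Sig, add_div, mul_comm α]
    gcongr
    exact div_self_le_one _
  have hA₀ := posDef_Sig Φ y hα 0
  have hdet0 : (Sig m α Φ y 0).det = α ^ m := by simp [Sig]
  rw [← Real.log_div hA.det_pos.ne' hA₀.det_pos.ne', ← Real.log_pow]
  refine Real.log_le_log (div_pos hA.det_pos hA₀.det_pos) ?_
  calc (Sig m α Φ y T).det / (Sig m α Φ y 0).det ≤ ((Sig m α Φ y T).trace / m) ^ m / α ^ m := by
        rw [hdet0]
        gcongr
        simpa using hA.posSemidef.det_le_trace_div_card_pow
    _ = ((Sig m α Φ y T).trace / (m * α)) ^ m := by rw [← div_pow, div_div]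
    _ ≤ _ := by
      have := hA.posSemidef.trace_nonneg
      gcongr

end Sig

theorem stmt15_general (m N T : ℕ)
    (α : ℝ) (hα : 0 < α)
    (Φ : ℕ → ℕ) (hΦ : ∀ t ∈ Finset.Icc 1 T, Φ t ≤ N)
    (y : ℕ → ℕ → Fin m → ℝ)
    (hy : ∀ t ∈ Finset.Icc 1 T, ∀ k ∈ Finset.Icc 1 (Φ t),
      Real.sqrt (y t k ⬝ᵥ y t k) ≤ 1) :
    ∑ t ∈ Finset.Icc 1 T, ∑ k ∈ Finset.Icc 1 (Φ t),
        y t k ⬝ᵥ (Sig m α Φ y (t - 1))⁻¹ *ᵥ y t k ≤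
      (N : ℝ) * m * Real.log (1 + T * N / (m * α)) / (α * Real.log (1 + α⁻¹)) := by
  have hy' : ∀ t ∈ Icc 1 T, ∀ k ∈ Icc 1 (Φ t), y t k ⬝ᵥ y t k ≤ 1 :=
    fun t ht k hk => Real.sqrt_le_one.1 (hy t ht k hk)
  have hsucc : ∀ t ∈ range T, t + 1 ∈ Icc 1 T := fun t ht =>
    mem_Icc.2 ⟨Nat.le_add_left 1 t, mem_range.1 ht⟩
  set c := α⁻¹ / Real.log (1 + α⁻¹)
  set f := fun t => Real.log (Sig m α Φ y t).det
  have hc : 0 ≤ c := div_nonneg (by positivity) (Real.log_nonneg (by simpa using hα.le))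
  calc _ = ∑ t ∈ range T, ∑ k ∈ Icc 1 (Φ (t + 1)),
        y (t + 1) k ⬝ᵥ (Sig m α Φ y t)⁻¹ *ᵥ y (t + 1) k := by
        simp only [sum_Icc_one_eq_sum_range, add_tsub_cancel_right]
    _ ≤ ∑ t ∈ range T, N * (c * (f (t + 1) - f t)) := sum_le_sum fun t ht =>
        sum_dotProduct_inv_Sig_mulVec_le Φ y hα (hΦ _ (hsucc t ht)) (hy' _ (hsucc t ht))
    _ = N * c * (f T - f 0) := by rw [← mul_sum, ← mul_sum, sum_range_sub]; ring
    _ ≤ N * c * (m * Real.log (1 + T * N / (m * α))) := by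
        gcongr
        exact log_det_Sig_sub_log_det_Sig_zero_le Φ y hα hΦ hy'
    _ = _ := by ring

/-- the sum-of-squares elliptical potential bound
`Σ_{t=1}^T Σ_{k=1}^{Φ_t} g_{t,k}² ≤ N m log(1 + TN/(mα)) / (α log(1 + α⁻¹))`, where
`g_{t,k}² = y_{t,k}ᵀ (Σ_{t-1})⁻¹ y_{t,k}`. -/
theorem stmt15 (m N T : ℕ) (hm : 1 ≤ m) (hN : 1 ≤ N) (hT : 1 ≤ T)
    (α : ℝ) (hα : 0 < α)
    (Φ : ℕ → ℕ) (hΦ : ∀ t ∈ Finset.Icc 1 T, Φ t ≤ N)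
    (y : ℕ → ℕ → Fin m → ℝ)
    (hy : ∀ t ∈ Finset.Icc 1 T, ∀ k ∈ Finset.Icc 1 (Φ t),
      Real.sqrt (y t k ⬝ᵥ y t k) ≤ 1) :
    ∑ t ∈ Finset.Icc 1 T, ∑ k ∈ Finset.Icc 1 (Φ t),
        y t k ⬝ᵥ (Sig m α Φ y (t - 1))⁻¹ *ᵥ y t k ≤
      (N : ℝ) * m * Real.log (1 + T * N / (m * α)) / (α * Real.log (1 + α⁻¹)) :=
  stmt15_general m N T α hα Φ hΦ y hy
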